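/- arXiv:2207.03423 — 3 statements merged into one kernel-verified Lean document; each statement's English description precedes it below -/
import Mathlib

section
/- Let X be a complete separable metric space, let Y and Z be compact metric spaces, and let m be a finite Borel measure on X. Let f_n : X × Y → Z and f : X × Y → Z be functions that are Borel-measurable in the first variable and continuous in the second variable, and assume that for m-almost every x ∈ X the maps f_n(x,·) converge to f(x,·) uniformly on Y. Let μ_n be finite nonnegative Borel measures on X × Y such that μ_n converges weakly to μ (i.e., ∫φ dμ_n → ∫φ dμ for every bounded continuous φ on X × Y) and such that the pushforward of each μ_n under the projection to X equals m. Then the pushforwards of μ_n under the map (x,y) ↦ (x, y, f_n(x,y)) converge weakly in the space of finite measures on X × Y × Z to the pushforward of μ under (x,y) ↦ (x, y, f(x,y)). -/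
/-!
Write `G n x = ψ (x, ·, fn n (x, ·))` and `G x = ψ (x, ·, f (x, ·))` as maps `X → C(Y, ℝ)`; the
integrals to compare are then `∫ G n x y ∂μ n` and `∫ G x y ∂μlim`. Every `μ n`, and hence also
the weak limit `μlim`, has first marginal `m`, so replacing `G n` by `G` costs at most
`∫ ‖G n x - G x‖ ∂m`, which tends to zero by dominated convergence because `G n x → G x` in
`C(Y, ℝ)` for `m`-a.e. `x`. The same marginal estimate lets one approximate `G`, which is only
measurable in `x`, in `L¹(m; C(Y, ℝ))` by a bounded continuous `H`, and `∫ H x y ∂μ n` converges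
by weak convergence, `(x, y) ↦ H x y` being bounded and continuous on `X × Y`.
-/

open MeasureTheory Filter Topology BoundedContinuousFunction

theorem measurable_of_measurable_dist {α E : Type*} [MeasurableSpace α] [PseudoMetricSpace E]
    [SecondCountableTopology E] [MeasurableSpace E] [BorelSpace E] {f : α → E}
    (hf : ∀ c, Measurable fun a => dist (f a) c) : Measurable f := by
  refine measurable_of_isOpen fun U hU => ?_
  choose r hr hrU using Metric.isOpen_iff.1 hU
  obtain ⟨T, hT, hTU⟩ := TopologicalSpace.isOpen_iUnion_countable
    (fun c : U => Metric.ball (c : E) (r c c.2)) fun _ => Metric.isOpen_ball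
  have hU_eq : U = ⋃ c ∈ T, Metric.ball (c : E) (r c c.2) := by
    rw [hTU]
    refine subset_antisymm (fun x hx => ?_) (Set.iUnion_subset fun c => hrU c c.2)
    exact Set.mem_iUnion.2 ⟨⟨x, hx⟩, Metric.mem_ball_self (hr x hx)⟩
  rw [hU_eq, Set.preimage_iUnion₂]
  exact .biUnion hT fun c _ => measurableSet_lt (hf c) measurable_const

theorem ContinuousMap.stronglyMeasurable_of_measurable_eval {α Y E : Type*} [MeasurableSpace α]
    [PseudoMetricSpace Y] [CompactSpace Y] [PseudoMetricSpace E] [SecondCountableTopology E]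
    [MeasurableSpace E] [BorelSpace E] {G : α → C(Y, E)} (hG : ∀ y, Measurable fun a => G a y) :
    StronglyMeasurable G := by
  borelize C(Y, E)
  refine (measurable_of_measurable_dist fun c => ?_).stronglyMeasurable
  obtain ⟨D, hD, hD_dense⟩ := TopologicalSpace.exists_countable_dense Y
  have := hD.to_subtype
  have hdist : ∀ a, dist (G a) c = ⨆ y : D, dist (G a y) (c y) := fun a => by
    rw [ContinuousMap.dist_eq_iSup,
      (hD_dense.ciSup' (f := fun y => dist (G a y) (c y)) (by fun_prop)).symm]
  simp_rw [hdist]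
  exact .iSup fun y => (hG y).dist measurable_const

theorem measurable_prod_of_measurable_of_continuous {X Y Z : Type*} [MeasurableSpace X]
    [MetricSpace Y] [SecondCountableTopology Y] [MeasurableSpace Y] [OpensMeasurableSpace Y]
    [PseudoMetricSpace Z] [MeasurableSpace Z] [BorelSpace Z] {f : X × Y → Z}
    (hf_meas : ∀ y, Measurable fun x => f (x, y)) (hf_cont : ∀ x, Continuous fun y => f (x, y)) :
    Measurable f :=
  (measurable_uncurry_of_continuous_of_measurable (u := fun y x => f (x, y)) hf_cont
    hf_meas).comp measurable_swap

section Uncurry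

variable {X Y E : Type*} [MeasurableSpace X] [PseudoMetricSpace Y] [CompactSpace Y]
  [MeasurableSpace Y] [OpensMeasurableSpace Y] [NormedAddCommGroup E]

theorem integrable_uncurry_of_integrable_map_fst {ν : Measure (X × Y)} {G : X → C(Y, E)}
    (hG : Integrable G (ν.map Prod.fst)) : Integrable (fun p => G p.1 p.2) ν := by
  have hG_fst : Integrable (fun p : X × Y => G p.1) ν := hG.comp_measurable measurable_fst
  refine hG_fst.norm.mono' ?_ (ae_of_all _ fun p => (G p.1).norm_coe_le_norm p.2)
  exact continuous_eval.comp_aestronglyMeasurable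
    (hG_fst.aestronglyMeasurable.prodMk measurable_snd.aestronglyMeasurable)

theorem dist_integral_uncurry_le [NormedSpace ℝ E] {ν : Measure (X × Y)} {G H : X → C(Y, E)}
    (hG : Integrable G (ν.map Prod.fst)) (hH : Integrable H (ν.map Prod.fst)) :
    dist (∫ p, G p.1 p.2 ∂ν) (∫ p, H p.1 p.2 ∂ν) ≤ ∫ x, ‖G x - H x‖ ∂(ν.map Prod.fst) := by
  rw [dist_eq_norm, ← integral_sub (integrable_uncurry_of_integrable_map_fst hG)
    (integrable_uncurry_of_integrable_map_fst hH),
    integral_map (f := fun x => ‖G x - H x‖) measurable_fst.aemeasurable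
      (hG.sub hH).norm.aestronglyMeasurable]
  exact norm_integral_le_of_norm_le ((hG.sub hH).norm.comp_measurable measurable_fst)
    (ae_of_all _ fun p => (G p.1 - H p.1).norm_coe_le_norm p.2)

end Uncurry

noncomputable def BoundedContinuousFunction.uncurry {X Y E : Type*} [TopologicalSpace X]
    [TopologicalSpace Y] [CompactSpace Y] [NormedAddCommGroup E] (H : X →ᵇ C(Y, E)) : X × Y →ᵇ E :=
  .ofNormedAddCommGroup (fun p => H p.1 p.2) (by fun_prop) ‖H‖
    fun p => ((H p.1).norm_coe_le_norm p.2).trans (H.norm_coe_le_norm p.1)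

section WeakConvergence

variable {ι X Y : Type*} {L : Filter ι} [PseudoMetricSpace X] [MeasurableSpace X] [BorelSpace X]
  [PseudoMetricSpace Y] [MeasurableSpace Y]
  {m : Measure X} [IsFiniteMeasure m] {μ : ι → Measure (X × Y)} {μlim : Measure (X × Y)}

theorem map_fst_eq_of_tendsto_integral [L.NeBot] [IsFiniteMeasure μlim]
    (hweak : ∀ φ : X × Y →ᵇ ℝ, Tendsto (fun n => ∫ p, φ p ∂(μ n)) L (𝓝 (∫ p, φ p ∂μlim)))
    (hproj : ∀ n, (μ n).map Prod.fst = m) : μlim.map Prod.fst = m := by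
  refine ext_of_forall_integral_eq_of_IsFiniteMeasure fun φ => ?_
  have h_fst : ∀ ν : Measure (X × Y), ∫ p, φ p.1 ∂ν = ∫ x, φ x ∂(ν.map Prod.fst) := fun ν =>
    (integral_map measurable_fst.aemeasurable φ.continuous.aestronglyMeasurable).symm
  have hlim := hweak (φ.compContinuous ⟨Prod.fst, continuous_fst⟩)
  simp only [compContinuous_apply, ContinuousMap.coe_mk, h_fst, hproj] at hlim
  exact (tendsto_nhds_unique tendsto_const_nhds hlim).symm

theorem tendsto_integral_uncurry_of_tendsto_integral [CompactSpace Y] [BorelSpace Y]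
    (hweak : ∀ φ : X × Y →ᵇ ℝ, Tendsto (fun n => ∫ p, φ p ∂(μ n)) L (𝓝 (∫ p, φ p ∂μlim)))
    (hproj : ∀ n, (μ n).map Prod.fst = m) (hproj_lim : μlim.map Prod.fst = m)
    {G : X → C(Y, ℝ)} (hG : Integrable G m) :
    Tendsto (fun n => ∫ p, G p.1 p.2 ∂(μ n)) L (𝓝 (∫ p, G p.1 p.2 ∂μlim)) := by
  refine Metric.tendsto_nhds.2 fun ε hε => ?_
  obtain ⟨H, hGH, hH⟩ := hG.exists_boundedContinuous_integral_sub_le (by positivity : 0 < ε / 4)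
  have approx : ∀ ν : Measure (X × Y), ν.map Prod.fst = m →
      dist (∫ p, G p.1 p.2 ∂ν) (∫ p, H.uncurry p ∂ν) ≤ ε / 4 := by
    rintro ν rfl
    exact (dist_integral_uncurry_le hG hH).trans hGH
  filter_upwards [Metric.tendsto_nhds.1 (hweak H.uncurry) (ε / 4) (by positivity)] with n hn
  calc dist (∫ p, G p.1 p.2 ∂(μ n)) (∫ p, G p.1 p.2 ∂μlim)
      ≤ dist (∫ p, G p.1 p.2 ∂(μ n)) (∫ p, H.uncurry p ∂(μ n))
        + dist (∫ p, H.uncurry p ∂(μ n)) (∫ p, H.uncurry p ∂μlim)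
        + dist (∫ p, H.uncurry p ∂μlim) (∫ p, G p.1 p.2 ∂μlim) := dist_triangle4 _ _ _ _
    _ < ε / 4 + ε / 4 + ε / 4 :=
      add_lt_add_of_lt_of_le (add_lt_add_of_le_of_lt (approx _ (hproj n)) hn)
        (dist_comm (α := ℝ) _ _ ▸ approx _ hproj_lim)
    _ < ε := by linarith

end WeakConvergence

theorem tendsto_integral_norm_sub_of_tendsto_ae {X E : Type*} [MeasurableSpace X]
    [NormedAddCommGroup E] {m : Measure X} [IsFiniteMeasure m] {F : ℕ → X → E} {f : X → E}
    {C : ℝ} (hF : ∀ n, AEStronglyMeasurable (F n) m) (hf : AEStronglyMeasurable f m)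
    (hFC : ∀ n x, ‖F n x‖ ≤ C) (hfC : ∀ x, ‖f x‖ ≤ C)
    (hlim : ∀ᵐ x ∂m, Tendsto (fun n => F n x) atTop (𝓝 (f x))) :
    Tendsto (fun n => ∫ x, ‖F n x - f x‖ ∂m) atTop (𝓝 0) := by
  have := tendsto_integral_of_dominated_convergence (fun _ => C + C)
    (fun n => ((hF n).sub hf).norm) (integrable_const _)
    (fun n => ae_of_all _ fun x => (norm_norm _).trans_le
      ((norm_sub_le _ _).trans (add_le_add (hFC n x) (hfC x))))
    (hlim.mono fun x hx => tendsto_iff_norm_sub_tendsto_zero.1 hx)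
  simpa using this

section GraphSection

variable {X Y Z : Type*} [TopologicalSpace X] [MetricSpace Y] [CompactSpace Y]
  [PseudoMetricSpace Z] (ψ : X × Y × Z →ᵇ ℝ) (f : X × Y → Z)
  (hf : ∀ x, Continuous fun y => f (x, y))

noncomputable def graphSection (x : X) : C(Y, ℝ) :=
  ⟨fun y => ψ (x, y, f (x, y)),
    ψ.continuous.comp (continuous_const.prodMk (continuous_id.prodMk (hf x)))⟩

theorem norm_graphSection_le (x : X) : ‖graphSection ψ f hf x‖ ≤ ‖ψ‖ :=
  (ContinuousMap.norm_le _ (norm_nonneg ψ)).2 fun _ => ψ.norm_coe_le_norm _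

theorem tendsto_graphSection [CompactSpace Z] {ι : Type*} {L : Filter ι} {F : ι → X × Y → Z}
    (hF : ∀ n x, Continuous fun y => F n (x, y)) {x : X}
    (hx : TendstoUniformly (fun n y => F n (x, y)) (fun y => f (x, y)) L) :
    Tendsto (fun n => graphSection ψ (F n) (hF n) x) L (𝓝 (graphSection ψ f hf x)) := by
  have hψx : UniformContinuous fun q : Y × Z => ψ (x, q) :=
    CompactSpace.uniformContinuous_of_continuous (by fun_prop)
  have hgraph : TendstoUniformly (fun n y => (y, F n (x, y))) (fun y => (y, f (x, y))) L := by
    refine Metric.tendstoUniformly_iff.2 fun ε hε => ?_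
    filter_upwards [Metric.tendstoUniformly_iff.1 hx ε hε] with n hn y
    simpa [Prod.dist_eq] using hn y
  exact ContinuousMap.tendsto_iff_tendstoUniformly.2 (hψx.comp_tendstoUniformly hgraph)

variable [MeasurableSpace X] [OpensMeasurableSpace X] [MeasurableSpace Y] [BorelSpace Y]
  [MeasurableSpace Z] [BorelSpace Z] [SecondCountableTopology Z]

theorem stronglyMeasurable_graphSection (hf_meas : ∀ y, Measurable fun x => f (x, y)) :
    StronglyMeasurable (graphSection ψ f hf) :=
  ContinuousMap.stronglyMeasurable_of_measurable_eval fun y =>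
    ψ.continuous.measurable.comp (measurable_id.prodMk (measurable_const.prodMk (hf_meas y)))

theorem integrable_graphSection (hf_meas : ∀ y, Measurable fun x => f (x, y)) (m : Measure X)
    [IsFiniteMeasure m] : Integrable (graphSection ψ f hf) m :=
  .of_bound (stronglyMeasurable_graphSection ψ f hf hf_meas).aestronglyMeasurable _
    (ae_of_all _ (norm_graphSection_le ψ f hf))

theorem integral_map_graph (hf_meas : ∀ y, Measurable fun x => f (x, y)) (ν : Measure (X × Y)) :
    ∫ q, ψ q ∂(ν.map fun p => (p.1, p.2, f p)) = ∫ p, graphSection ψ f hf p.1 p.2 ∂ν :=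
  integral_map (measurable_fst.prodMk (measurable_snd.prodMk
    (measurable_prod_of_measurable_of_continuous hf_meas hf))).aemeasurable
    ψ.continuous.aestronglyMeasurable

end GraphSection

theorem pushforward_weak_convergence_general
    {X Y Z : Type*} [MetricSpace X]
    [MetricSpace Y] [CompactSpace Y] [MetricSpace Z] [CompactSpace Z]
    [MeasurableSpace X] [BorelSpace X] [MeasurableSpace Y] [BorelSpace Y]
    [MeasurableSpace Z] [BorelSpace Z]
    (m : Measure X) [IsFiniteMeasure m]
    (f : X × Y → Z) (fn : ℕ → X × Y → Z)
    (hf_meas : ∀ y, Measurable fun x => f (x, y))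
    (hf_cont : ∀ x, Continuous fun y => f (x, y))
    (hfn_meas : ∀ n y, Measurable fun x => fn n (x, y))
    (hfn_cont : ∀ n x, Continuous fun y => fn n (x, y))
    (hconv : ∀ᵐ x ∂m,
      TendstoUniformly (fun n y => fn n (x, y)) (fun y => f (x, y)) atTop)
    (μ : ℕ → Measure (X × Y)) (μlim : Measure (X × Y))
    [IsFiniteMeasure μlim]
    (hweak : ∀ φ : BoundedContinuousFunction (X × Y) ℝ,
      Tendsto (fun n => ∫ p, φ p ∂(μ n)) atTop (nhds (∫ p, φ p ∂μlim)))
    (hproj : ∀ n, (μ n).map Prod.fst = m) :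
    ∀ ψ : BoundedContinuousFunction (X × Y × Z) ℝ,
      Tendsto (fun n => ∫ q, ψ q ∂((μ n).map (fun p => (p.1, p.2, fn n p))))
        atTop (nhds (∫ q, ψ q ∂(μlim.map (fun p => (p.1, p.2, f p))))) := by
  intro ψ
  simp only [integral_map_graph ψ f hf_cont hf_meas,
    fun n => integral_map_graph ψ (fn n) (hfn_cont n) (hfn_meas n)]
  have hG := integrable_graphSection ψ f hf_cont hf_meas m
  have hGn n := integrable_graphSection ψ (fn n) (hfn_cont n) (hfn_meas n) m
  have hlim := tendsto_integral_uncurry_of_tendsto_integral hweak hproj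
    (map_fst_eq_of_tendsto_integral hweak hproj) hG
  have herr := tendsto_integral_norm_sub_of_tendsto_ae (fun n => (hGn n).aestronglyMeasurable)
    hG.aestronglyMeasurable (fun n => norm_graphSection_le ψ _ _) (norm_graphSection_le ψ _ _)
    (hconv.mono fun x hx => tendsto_graphSection ψ f hf_cont hfn_cont hx)
  refine hlim.congr_dist (squeeze_zero (fun _ => dist_nonneg) (fun n => ?_) herr)
  rw [dist_comm, ← hproj n]
  exact dist_integral_uncurry_le (hproj n ▸ hGn n) (hproj n ▸ hG)

/-- Lemma 6.4: stability of pushforwards under weak convergence. If `f_n(x, ·) → f(x, ·)`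
uniformly for `m`-a.e. `x`, the `f_n, f` are measurable in the first variable and continuous
in the second, `μ_n ⇀ μ` weakly with first marginals all equal to `m`, then
`(id × f_n)_# μ_n ⇀ (id × f)_# μ` weakly. -/
theorem pushforward_weak_convergence
    {X Y Z : Type*} [MetricSpace X] [CompleteSpace X] [TopologicalSpace.SeparableSpace X]
    [MetricSpace Y] [CompactSpace Y] [MetricSpace Z] [CompactSpace Z]
    [MeasurableSpace X] [BorelSpace X] [MeasurableSpace Y] [BorelSpace Y]
    [MeasurableSpace Z] [BorelSpace Z]
    (m : Measure X) [IsFiniteMeasure m]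
    (f : X × Y → Z) (fn : ℕ → X × Y → Z)
    (hf_meas : ∀ y, Measurable fun x => f (x, y))
    (hf_cont : ∀ x, Continuous fun y => f (x, y))
    (hfn_meas : ∀ n y, Measurable fun x => fn n (x, y))
    (hfn_cont : ∀ n x, Continuous fun y => fn n (x, y))
    (hconv : ∀ᵐ x ∂m,
      TendstoUniformly (fun n y => fn n (x, y)) (fun y => f (x, y)) atTop)
    (μ : ℕ → Measure (X × Y)) (μlim : Measure (X × Y))
    (hμfin : ∀ n, IsFiniteMeasure (μ n)) [IsFiniteMeasure μlim]
    (hweak : ∀ φ : BoundedContinuousFunction (X × Y) ℝ,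
      Tendsto (fun n => ∫ p, φ p ∂(μ n)) atTop (nhds (∫ p, φ p ∂μlim)))
    (hproj : ∀ n, (μ n).map Prod.fst = m) :
    ∀ ψ : BoundedContinuousFunction (X × Y × Z) ℝ,
      Tendsto (fun n => ∫ q, ψ q ∂((μ n).map (fun p => (p.1, p.2, fn n p))))
        atTop (nhds (∫ q, ψ q ∂(μlim.map (fun p => (p.1, p.2, f p))))) :=
  pushforward_weak_convergence_general m f fn hf_meas hf_cont hfn_meas hfn_cont hconv μ μlim hweak
    hproj
end

section
/- Fix a real number N > 1 and ρ > 0, and let ν be a Borel probability measure on [0,∞). Define h : (0,∞) → [0,∞) by h(r) := ∫_{[0,∞)} (r − t)^{N−1} · 1_{(t, t+ρ)}(r) ν(dt). Assume that the ratio r ↦ h(r)/r^{N−1} is nonincreasing on the set {r > 0 : h(r) > 0}, i.e., for all 0 < r₁ ≤ r₂ with h(r₁) > 0 and h(r₂) > 0 one has h(r₁)/r₁^{N−1} ≥ h(r₂)/r₂^{N−1}. Then ν = δ₀, the Dirac mass at 0; consequently h(r) = r^{N−1} for all r ∈ (0, ρ). -/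
open MeasureTheory

noncomputable section

/-- The convolution density `h(r) = ∫ (r - t)^{N-1} 1_{(t, t+ρ)}(r) ν(dt)`. -/
def hconv (N ρ : ℝ) (ν : Measure ℝ) (r : ℝ) : ℝ :=
  ∫ t, Set.indicator (Set.Ioo t (t + ρ)) (fun _ => (r - t) ^ (N - 1)) r ∂ν

lemma hconv_eq (N ρ : ℝ) (ν : Measure ℝ) (r : ℝ) :
    hconv N ρ ν r = ∫ t in Set.Ioo (r - ρ) r, (r - t) ^ (N - 1) ∂ν := by
  rw [hconv, ← integral_indicator measurableSet_Ioo]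
  refine integral_congr_ae (Filter.Eventually.of_forall fun t => ?_)
  simp only [Set.indicator_apply, Set.mem_Ioo]
  by_cases h : r - ρ < t ∧ t < r
  · rw [if_pos ⟨h.2, by linarith [h.1]⟩, if_pos h]
  · rw [if_neg (fun hc => h ⟨by linarith [hc.2], hc.1⟩), if_neg h]

lemma integrableOn_bdd (ν : Measure ℝ) [IsFiniteMeasure ν] {f : ℝ → ℝ} (hf : Measurable f)
    {s : Set ℝ} (hs : MeasurableSet s) {C : ℝ} (hC : ∀ t ∈ s, |f t| ≤ C) :
    IntegrableOn f s ν := by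
  refine Measure.integrableOn_of_bounded (M := C) (measure_ne_top ν s) hf.aestronglyMeasurable ?_
  refine (ae_restrict_iff' hs).2 (Filter.Eventually.of_forall fun t ht => ?_)
  rw [Real.norm_eq_abs]
  exact hC t ht

lemma int_ratio (N ρ : ℝ) (hN : 1 < N) (ν : Measure ℝ) [IsFiniteMeasure ν] {r : ℝ}
    (hr : 0 < r) :
    IntegrableOn (fun t => ((r - t) / r) ^ (N - 1)) (Set.Ioo (r - ρ) r) ν := by
  refine integrableOn_bdd ν (by fun_prop) measurableSet_Ioo (C := (ρ / r) ^ (N - 1)) ?_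
  intro t ht
  have h1 : (0:ℝ) ≤ (r - t) / r := div_nonneg (by linarith [ht.2]) hr.le
  rw [abs_of_nonneg (Real.rpow_nonneg h1 _)]
  have h2 : r - t ≤ ρ := by linarith [ht.1]
  refine Real.rpow_le_rpow h1 (by gcongr) (by linarith)

lemma int_plain (N ρ : ℝ) (hN : 1 < N) (ν : Measure ℝ) [IsFiniteMeasure ν] (r : ℝ) :
    IntegrableOn (fun t => (r - t) ^ (N - 1)) (Set.Ioo (r - ρ) r) ν := by
  refine integrableOn_bdd ν (by fun_prop) measurableSet_Ioo (C := ρ ^ (N - 1)) ?_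
  intro t ht
  have h1 : (0:ℝ) ≤ r - t := by linarith [ht.2]
  rw [abs_of_nonneg (Real.rpow_nonneg h1 _)]
  exact Real.rpow_le_rpow h1 (by linarith [ht.1]) (by linarith)

lemma hconv_pos (N ρ : ℝ) (hN : 1 < N) (ν : Measure ℝ) [IsFiniteMeasure ν] {r : ℝ}
    {E : Set ℝ} (hE : E ⊆ Set.Ioo (r - ρ) r) (hEpos : 0 < ν E) :
    0 < hconv N ρ ν r := by
  rw [hconv_eq]
  have hnn : 0 ≤ᶠ[ae (ν.restrict (Set.Ioo (r - ρ) r))] fun t => (r - t) ^ (N - 1) :=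
    (ae_restrict_iff' measurableSet_Ioo).2 (Filter.Eventually.of_forall fun t ht =>
      Real.rpow_nonneg (by linarith [ht.2]) _)
  rw [setIntegral_pos_iff_support_of_nonneg_ae hnn (int_plain N ρ hN ν r)]
  refine lt_of_lt_of_le hEpos (measure_mono fun t ht => ?_)
  exact ⟨(Real.rpow_pos_of_pos (by linarith [(hE ht).2]) _).ne', hE ht⟩

lemma ratio_eq (N ρ : ℝ) (ν : Measure ℝ) {r : ℝ} (hr : 0 < r) :
    hconv N ρ ν r / r ^ (N - 1)
      = ∫ t in Set.Ioo (r - ρ) r, ((r - t) / r) ^ (N - 1) ∂ν := by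
  rw [hconv_eq, ← integral_div]
  refine setIntegral_congr_fun measurableSet_Ioo fun t ht => ?_
  exact (Real.div_rpow (by linarith [ht.2]) hr.le _).symm

lemma core_contradiction (N ρ : ℝ) (hN : 1 < N) (hρ : 0 < ρ) (ν : Measure ℝ)
    [IsProbabilityMeasure ν] (hsupp : ν (Set.Iio 0) = 0)
    (hmono : ∀ r₁ r₂ : ℝ, 0 < r₁ → r₁ ≤ r₂ →
      0 < hconv N ρ ν r₁ → 0 < hconv N ρ ν r₂ →
      hconv N ρ ν r₂ / r₂ ^ (N - 1) ≤ hconv N ρ ν r₁ / r₁ ^ (N - 1))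
    (a m r₁ r₂ : ℝ) (ha : 0 ≤ a) (ham : a < m) (hmr : m < r₁) (hrr : r₁ < r₂)
    (hr2 : r₂ < a + ρ) (hz : (0:ℝ) ∉ Set.Ioc (r₁ - ρ) (r₂ - ρ))
    (hEmass : 0 < ν (Set.Icc a m ∩ Set.Ioi 0))
    (hA3 : ν (Set.Ioo 0 a) = 0) : False := by
  set E : Set ℝ := Set.Icc a m ∩ Set.Ioi 0 with hEdef
  have hr₁ : (0:ℝ) < r₁ := lt_of_le_of_lt ha (ham.trans hmr)
  have hr₂ : (0:ℝ) < r₂ := hr₁.trans hrr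
  have hNpos : (0:ℝ) < N - 1 := by linarith
  set D : Set ℝ := Set.Ioo (r₂ - ρ) r₁ with hDdef
  set f₁ : ℝ → ℝ := fun t => ((r₁ - t) / r₁) ^ (N - 1) with hf₁
  set f₂ : ℝ → ℝ := fun t => ((r₂ - t) / r₂) ^ (N - 1) with hf₂
  have hED : E ⊆ D := by
    rintro t ⟨⟨h1, h2⟩, h3⟩
    exact ⟨by linarith, by linarith⟩
  have hED1 : E ⊆ Set.Ioo (r₁ - ρ) r₁ := by
    rintro t ⟨⟨h1, h2⟩, h3⟩
    exact ⟨by linarith, by linarith⟩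
  have hED2 : E ⊆ Set.Ioo (r₂ - ρ) r₂ := by
    rintro t ⟨⟨h1, h2⟩, h3⟩
    exact ⟨by linarith, by linarith⟩
  have hDD1 : D ⊆ Set.Ioo (r₁ - ρ) r₁ := Set.Ioo_subset_Ioo_left (by linarith)
  have hDD2 : D ⊆ Set.Ioo (r₂ - ρ) r₂ := Set.Ioo_subset_Ioo_right hrr.le
  have h1pos := hconv_pos N ρ hN ν hED1 hEmass
  have h2pos := hconv_pos N ρ hN ν hED2 hEmass
  -- a.e. nonnegativity of points
  have hae : ∀ᵐ t ∂ν, (0:ℝ) ≤ t := by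
    rw [ae_iff]
    have : {t : ℝ | ¬ (0:ℝ) ≤ t} = Set.Iio 0 := by
      ext t; simp only [Set.mem_setOf_eq, Set.mem_Iio, not_le]
    rw [this]
    exact hsupp
  -- D₁ =ᵐ D
  have hD1ae : Set.Ioo (r₁ - ρ) r₁ =ᶠ[ae ν] D := by
    rw [MeasureTheory.ae_eq_set]
    constructor
    · refine measure_mono_null (fun t ht => ?_) (measure_union_null hsupp hA3)
      obtain ⟨⟨h1, h2⟩, h3⟩ := ht
      have ht2 : t ≤ r₂ - ρ := by
        by_contra h
        exact h3 ⟨by linarith, h2⟩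
      have htne : t ≠ 0 := fun h => hz (h ▸ ⟨by linarith, by linarith⟩)
      rcases lt_or_ge t 0 with h | h
      · exact Or.inl h
      · exact Or.inr ⟨lt_of_le_of_ne h (Ne.symm htne), by linarith⟩
    · have : D \ Set.Ioo (r₁ - ρ) r₁ = ∅ := Set.diff_eq_empty.2 hDD1
      rw [this, measure_empty]
  -- integrability
  have hint1D : IntegrableOn f₁ D ν := (int_ratio N ρ hN ν hr₁).mono_set hDD1
  have hint2D : IntegrableOn f₂ D ν := (int_ratio N ρ hN ν hr₂).mono_set hDD2
  have hintsub : IntegrableOn (fun t => f₂ t - f₁ t) D ν := hint2D.sub hint1D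
  -- strict positivity of ∫_E (f₂ - f₁)
  have hstrict : ∀ t ∈ E, f₁ t < f₂ t := by
    rintro t ⟨⟨h1, h2⟩, h3⟩
    have h3' : (0:ℝ) < t := h3
    have hb1 : (0:ℝ) ≤ (r₁ - t) / r₁ := div_nonneg (by linarith) hr₁.le
    have hblt : (r₁ - t) / r₁ < (r₂ - t) / r₂ := by
      rw [div_lt_div_iff₀ hr₁ hr₂]
      nlinarith [mul_pos h3' (sub_pos.2 hrr)]
    exact Real.rpow_lt_rpow hb1 hblt hNpos
  have hEpos' : 0 < ∫ t in E, (f₂ t - f₁ t) ∂ν := by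
    have hnn : 0 ≤ᶠ[ae (ν.restrict E)] fun t => f₂ t - f₁ t := by
      refine (ae_restrict_iff' ((measurableSet_Icc.inter measurableSet_Ioi))).2
        (Filter.Eventually.of_forall fun t ht => ?_)
      simpa using (hstrict t ht).le
    rw [setIntegral_pos_iff_support_of_nonneg_ae hnn (hintsub.mono_set hED)]
    refine lt_of_lt_of_le hEmass (measure_mono fun t ht => ?_)
    exact ⟨sub_ne_zero.2 (hstrict t ht).ne', ht⟩
  -- monotone comparison on D
  have hle : 0 ≤ᶠ[ae (ν.restrict D)] fun t => f₂ t - f₁ t := by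
    have h2 : ∀ᵐ t ∂ν.restrict D, (0:ℝ) ≤ t := ae_restrict_of_ae hae
    have h3 : ∀ᵐ t ∂ν.restrict D, t ∈ D := ae_restrict_mem measurableSet_Ioo
    filter_upwards [h2, h3] with t ht htD
    obtain ⟨hd1, hd2⟩ := htD
    have hb1 : (0:ℝ) ≤ (r₁ - t) / r₁ := div_nonneg (by linarith) hr₁.le
    have hble : (r₁ - t) / r₁ ≤ (r₂ - t) / r₂ := by
      rw [div_le_div_iff₀ hr₁ hr₂]
      nlinarith [mul_nonneg ht (sub_nonneg.2 hrr.le)]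
    simpa using Real.rpow_le_rpow hb1 hble hNpos.le
  have hDdiff : 0 < ∫ t in D, (f₂ t - f₁ t) ∂ν :=
    lt_of_lt_of_le hEpos' (setIntegral_mono_set hintsub hle hED.eventuallyLE)
  have hsubeq : ∫ t in D, (f₂ t - f₁ t) ∂ν
      = (∫ t in D, f₂ t ∂ν) - ∫ t in D, f₁ t ∂ν := integral_sub hint2D hint1D
  have hf2nn : 0 ≤ᶠ[ae (ν.restrict (Set.Ioo (r₂ - ρ) r₂))] f₂ := by
    refine (ae_restrict_iff' measurableSet_Ioo).2 (Filter.Eventually.of_forall fun t ht => ?_)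
    exact Real.rpow_nonneg (div_nonneg (by linarith [ht.2]) hr₂.le) _
  have hstep3 : (∫ t in D, f₂ t ∂ν) ≤ ∫ t in Set.Ioo (r₂ - ρ) r₂, f₂ t ∂ν :=
    setIntegral_mono_set (int_ratio N ρ hN ν hr₂) hf2nn hDD2.eventuallyLE
  have hkey : hconv N ρ ν r₁ / r₁ ^ (N - 1) < hconv N ρ ν r₂ / r₂ ^ (N - 1) := by
    rw [ratio_eq N ρ ν hr₁, ratio_eq N ρ ν hr₂]
    calc ∫ t in Set.Ioo (r₁ - ρ) r₁, f₁ t ∂ν = ∫ t in D, f₁ t ∂ν :=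
          setIntegral_congr_set hD1ae
      _ < ∫ t in D, f₂ t ∂ν := by linarith
      _ ≤ ∫ t in Set.Ioo (r₂ - ρ) r₂, f₂ t ∂ν := hstep3
  exact absurd (hmono r₁ r₂ hr₁ hrr.le h1pos h2pos) (not_le.2 hkey)

/-- Proposition 6.11: if the density `h(r) = ∫ (r-t)^{N-1} 1_{(t,t+ρ)}(r) ν(dt)` obtained from
a probability measure `ν` on `[0, ∞)` is such that `r ↦ h(r)/r^{N-1}` is nonincreasing on
`{h > 0}`, then `ν = δ₀`; consequently `h(r) = r^{N-1}` on `(0, ρ)`. -/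
theorem measure_is_dirac_of_weak_mcp (N ρ : ℝ) (hN : 1 < N) (hρ : 0 < ρ)
    (ν : Measure ℝ) [IsProbabilityMeasure ν] (hsupp : ν (Set.Iio 0) = 0)
    (hmono : ∀ r₁ r₂ : ℝ, 0 < r₁ → r₁ ≤ r₂ →
      0 < hconv N ρ ν r₁ → 0 < hconv N ρ ν r₂ →
      hconv N ρ ν r₂ / r₂ ^ (N - 1) ≤ hconv N ρ ν r₁ / r₁ ^ (N - 1)) :
    ν = Measure.dirac 0 ∧
      ∀ r ∈ Set.Ioo (0:ℝ) ρ, hconv N ρ ν r = r ^ (N - 1) := by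
  have hIoi : ν (Set.Ioi 0) = 0 := by
    by_contra hpos
    have hne : ∃ s : ℝ, 0 < ν (Set.Ioc 0 s) := by
      by_contra hemp
      push_neg at hemp
      apply hpos
      have hsub : Set.Ioi (0:ℝ) ⊆ ⋃ n : ℕ, Set.Ioc (0:ℝ) (n + 1) := by
        intro t ht
        obtain ⟨n, hn⟩ := exists_nat_gt t
        exact Set.mem_iUnion.2 ⟨n, ht, by push_cast; linarith⟩
      exact measure_mono_null hsub (measure_iUnion_null fun n =>
        nonpos_iff_eq_zero.1 (hemp _))
    set S : Set ℝ := {s | 0 < ν (Set.Ioc 0 s)} with hSdef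
    have hSne : S.Nonempty := hne
    have hS0 : ∀ s ∈ S, (0:ℝ) ≤ s := by
      intro s hs
      by_contra h
      push_neg at h
      have he : Set.Ioc (0:ℝ) s = ∅ := Set.Ioc_eq_empty (by intro hc; linarith)
      simp only [hSdef, Set.mem_setOf_eq, he, measure_empty] at hs
      exact lt_irrefl 0 hs
    have hbdd : BddBelow S := ⟨0, hS0⟩
    set a : ℝ := sInf S with hadef
    have ha : 0 ≤ a := le_csInf hSne hS0
    have hA2 : ∀ s : ℝ, a < s → 0 < ν (Set.Ioc 0 s) := by
      intro s hs
      obtain ⟨t, htS, hts⟩ := exists_lt_of_csInf_lt hSne hs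
      exact lt_of_lt_of_le htS (measure_mono (Set.Ioc_subset_Ioc_right hts.le))
    have hA3 : ν (Set.Ioo 0 a) = 0 := by
      rcases eq_or_lt_of_le ha with h | hapos
      · rw [← h]
        simp
      · have hsub : Set.Ioo 0 a ⊆ ⋃ n : ℕ, Set.Ioc (0:ℝ) (a - a / (n + 1)) := by
          rintro t ⟨ht0, hta⟩
          have hat : 0 < a - t := by linarith
          obtain ⟨n, hn⟩ := exists_nat_gt (a / (a - t))
          refine Set.mem_iUnion.2 ⟨n, ht0, ?_⟩
          have h1 : a < n * (a - t) := by
            rw [div_lt_iff₀ hat] at hn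
            exact hn
          have h2 : a / (n + 1) ≤ a - t := by
            rw [div_le_iff₀ (by positivity)]
            nlinarith
          linarith
        refine measure_mono_null hsub (measure_iUnion_null fun n => ?_)
        by_contra hne2
        have hmem : (a - a / (n + 1)) ∈ S := pos_iff_ne_zero.2 hne2
        have := csInf_le hbdd hmem
        have hdiv : 0 < a / ((n:ℝ) + 1) := div_pos hapos (by positivity)
        linarith
    have hEm : ∀ m : ℝ, a < m → 0 < ν (Set.Icc a m ∩ Set.Ioi 0) := by
      intro m hm
      have h1 : Set.Ioc 0 m ⊆ Set.Ioo 0 a ∪ (Set.Icc a m ∩ Set.Ioi 0) := by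
        rintro t ⟨ht0, htm⟩
        rcases lt_or_ge t a with h | h
        · exact Or.inl ⟨ht0, h⟩
        · exact Or.inr ⟨⟨h, htm⟩, ht0⟩
      have h2 := (measure_mono h1).trans (measure_union_le (μ := ν) _ _)
      rw [hA3, zero_add] at h2
      exact lt_of_lt_of_le (hA2 m hm) h2
    rcases lt_or_ge a ρ with hcase | hcase
    · -- a < ρ : use points below ρ
      set ε : ℝ := ρ - a with hε
      have hεpos : 0 < ε := by simp [hε]; linarith
      refine core_contradiction N ρ hN hρ ν hsupp hmono a (a + ε/4) (a + ε/2) (a + 3*ε/4)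
        ha (by linarith) (by linarith) (by linarith) (by linarith) ?_
        (hEm _ (by linarith)) hA3
      rintro ⟨h1, h2⟩
      simp only [hε] at h2
      linarith
    · -- ρ ≤ a
      refine core_contradiction N ρ hN hρ ν hsupp hmono a (a + ρ/4) (a + ρ/2) (a + 3*ρ/4)
        ha (by linarith) (by linarith) (by linarith) (by linarith) ?_
        (hEm _ (by linarith)) hA3
      rintro ⟨h1, h2⟩
      linarith
  have hcompl : ν ({0}ᶜ : Set ℝ) = 0 := by
    have hu : ({0}ᶜ : Set ℝ) = Set.Iio 0 ∪ Set.Ioi 0 := by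
      ext t
      simp only [Set.mem_compl_iff, Set.mem_singleton_iff, Set.mem_union, Set.mem_Iio,
        Set.mem_Ioi]
      exact ne_iff_lt_or_gt
    rw [hu]
    exact measure_union_null hsupp hIoi
  have hone : ν {(0:ℝ)} = 1 := by
    have h := measure_add_measure_compl (μ := ν) (measurableSet_singleton (0:ℝ))
    rw [hcompl, add_zero, measure_univ] at h
    exact h
  have hν : ν = Measure.dirac 0 := by
    ext s hs
    rw [Measure.dirac_apply' _ hs]
    rcases em ((0:ℝ) ∈ s) with h0 | h0
    · have h1 : ν s = ν (s ∩ {0}) + ν (s \ {0}) :=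
        (measure_inter_add_diff s (measurableSet_singleton 0)).symm
      have h2 : ν (s \ {0}) = 0 :=
        measure_mono_null (fun t ht => ht.2) hcompl
      have h3 : s ∩ {0} = {0} :=
        Set.inter_eq_self_of_subset_right (Set.singleton_subset_iff.2 h0)
      rw [h1, h3, h2, add_zero, hone, Set.indicator_of_mem h0]
      rfl
    · have hsub : s ⊆ ({0}ᶜ : Set ℝ) := by
        intro t ht h
        rw [Set.mem_singleton_iff] at h
        subst h
        exact h0 ht
      have h2 : ν s = 0 := measure_mono_null hsub hcompl
      rw [h2, Set.indicator_of_notMem h0]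
  refine ⟨hν, fun r hr => ?_⟩
  rw [hν, hconv, integral_dirac]
  rw [Set.indicator_of_mem (show r ∈ Set.Ioo (0:ℝ) (0 + ρ) from
    Set.mem_Ioo.mpr ⟨hr.1, by rw [zero_add]; exact hr.2⟩)]
  rw [sub_zero]
end
end

section
/- Fix a real number N > 1 and D' > 0, let h be a probability CD(0,N) density on [0,D'], and let w ∈ (0,1). Then N·(1 − w)·r_h(w)^{N−1} ≤ D'^N·h(r_h(w)). -/
/-!
Write `f = h^{1/(N-1)}`. Since `f` is concave with `f 0 ≥ 0`, the ratio `f x / x` is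
nonincreasing, so `h x ≤ (x / r)^{N-1} h r` for `r ≤ x ≤ D'`. Integrating over `[r, D']`, where `h`
carries the mass `1 - w`, gives `1 - w ≤ h r / r^{N-1} · D'^N / N`.
-/

open MeasureTheory

noncomputable section

/-- A `CD(0,N)` density on `[0, D']`: nonnegative on `[0, D']`, positive on `(0, D')`,
and `h^{1/(N-1)}` is concave on `[0, D']`. -/
def IsCDDensity (N D' : ℝ) (h : ℝ → ℝ) : Prop :=
  (∀ x ∈ Set.Icc (0:ℝ) D', 0 ≤ h x) ∧
  (∀ x ∈ Set.Ioo (0:ℝ) D', 0 < h x) ∧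
  ConcaveOn ℝ (Set.Icc (0:ℝ) D') (fun x => h x ^ (1 / (N - 1)))

/-- A probability `CD(0,N)` density on `[0, D']`. -/
def IsProbCDDensity (N D' : ℝ) (h : ℝ → ℝ) : Prop :=
  IsCDDensity N D' h ∧ (∫ x in Set.Icc (0:ℝ) D', h x) = 1

open intervalIntegral

theorem ConcaveOn.mul_apply_le_mul_apply_of_le {s : Set ℝ} {f : ℝ → ℝ} (hf : ConcaveOn ℝ s f)
    (h0 : (0 : ℝ) ∈ s) (hf0 : 0 ≤ f 0) {r x : ℝ} (hx : x ∈ s) (hr : 0 < r) (hrx : r ≤ x) :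
    r * f x ≤ x * f r := by
  have hx0 : 0 < x := hr.trans_le hrx
  have ha : 0 ≤ 1 - r / x := sub_nonneg.2 ((div_le_one hx0).2 hrx)
  have hcomb := hf.2 h0 hx ha (div_nonneg hr.le hx0.le) (sub_add_cancel 1 (r / x))
  have hpt : (1 - r / x) • (0 : ℝ) + (r / x) • x = r := by
    simp [div_mul_cancel₀ r hx0.ne']
  rw [hpt, smul_eq_mul, smul_eq_mul] at hcomb
  have hrf : r / x * f x ≤ f r := by nlinarith [mul_nonneg ha hf0]
  calc r * f x = x * (r / x * f x) := by field_simp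
    _ ≤ x * f r := by gcongr

theorem le_div_rpow_mul_of_concaveOn_rpow_inv {D p : ℝ} {g : ℝ → ℝ} (hp : 0 < p)
    (hg : ∀ x ∈ Set.Icc 0 D, 0 ≤ g x)
    (hconc : ConcaveOn ℝ (Set.Icc 0 D) (fun x => g x ^ (1 / p)))
    {r x : ℝ} (hr : 0 < r) (hrx : r ≤ x) (hxD : x ≤ D) :
    g x ≤ (x / r) ^ p * g r := by
  have hx : x ∈ Set.Icc 0 D := ⟨hr.le.trans hrx, hxD⟩
  have h0 : (0 : ℝ) ∈ Set.Icc 0 D := ⟨le_rfl, hr.le.trans (hrx.trans hxD)⟩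
  have hgr : 0 ≤ g r := hg r ⟨hr.le, hrx.trans hxD⟩
  have hroot : g x ^ (1 / p) ≤ x / r * g r ^ (1 / p) := by
    rw [div_mul_eq_mul_div, le_div_iff₀ hr, mul_comm]
    exact hconc.mul_apply_le_mul_apply_of_le h0 (Real.rpow_nonneg (hg 0 h0) _) hx hr hrx
  calc g x = (g x ^ (1 / p)) ^ p := by rw [one_div, Real.rpow_inv_rpow (hg x hx) hp.ne']
    _ ≤ (x / r * g r ^ (1 / p)) ^ p := by
      gcongr
      exact Real.rpow_nonneg (hg x hx) _
    _ = (x / r) ^ p * g r := by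
      rw [Real.mul_rpow (div_nonneg hx.1 hr.le) (Real.rpow_nonneg hgr _), one_div,
        Real.rpow_inv_rpow hgr hp.ne']

theorem integral_rpow_sub_one_le {p r D : ℝ} (hp : 0 < p) (hr : 0 ≤ r) :
    ∫ x in r..D, x ^ (p - 1) ≤ D ^ p / p := by
  rw [integral_rpow (Or.inl (by linarith)), sub_add_cancel]
  gcongr
  linarith [Real.rpow_nonneg hr p]

theorem IsProbCDDensity.intervalIntegrable {N D' : ℝ} {h : ℝ → ℝ} (hh : IsProbCDDensity N D' h)
    {a b : ℝ} (ha : 0 ≤ a) (hab : a ≤ b) (hb : b ≤ D') : IntervalIntegrable h volume a b := by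
  have hInt : IntegrableOn h (Set.Icc 0 D') := by
    by_contra hc
    have := hh.2
    rw [integral_undef hc] at this
    norm_num at this
  rw [intervalIntegrable_iff_integrableOn_Icc_of_le hab]
  exact hInt.mono_set (Set.Icc_subset_Icc ha hb)

theorem IsProbCDDensity.intervalIntegral_eq_one_sub {N D' : ℝ} {h : ℝ → ℝ}
    (hh : IsProbCDDensity N D' h) {r : ℝ} (hr : 0 ≤ r) (hrD : r ≤ D') :
    ∫ x in r..D', h x = 1 - ∫ x in 0..r, h x := by
  have htotal : ∫ x in 0..D', h x = 1 := by
    rw [integral_of_le (hr.trans hrD), ← integral_Icc_eq_integral_Ioc, hh.2]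
  rw [← htotal, integral_interval_sub_left (hh.intervalIntegrable le_rfl (hr.trans hrD) le_rfl)
    (hh.intervalIntegrable le_rfl hr hrD)]

theorem radius_upper_estimate_general (N D' : ℝ) (hN : 1 < N)
    (h : ℝ → ℝ) (hh : IsProbCDDensity N D' h)
    (w : ℝ) :
    ∀ r ∈ Set.Ioo (0:ℝ) D', (∫ x in (0:ℝ)..r, h x) = w →
      N * (1 - w) * r ^ (N - 1) ≤ D' ^ N * h r := by
  rintro r ⟨hr, hrD⟩ rfl
  have hN1 : 0 < N - 1 := by linarith
  have hhr : 0 ≤ h r / r ^ (N - 1) := div_nonneg (hh.1.1 r ⟨hr.le, hrD.le⟩) (by positivity)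
  have hgrowth : ∫ x in r..D', h x ≤ (∫ x in r..D', x ^ (N - 1)) * (h r / r ^ (N - 1)) := by
    rw [← intervalIntegral.integral_mul_const]
    refine integral_mono_on hrD.le (hh.intervalIntegrable hr.le hrD.le le_rfl)
      ((intervalIntegrable_rpow (Or.inl hN1.le)).mul_const _) fun x hx => ?_
    rw [← mul_comm_div, ← Real.div_rpow (hr.le.trans hx.1) hr.le]
    exact le_div_rpow_mul_of_concaveOn_rpow_inv hN1 hh.1.1 hh.1.2.2 hr hx.1 hx.2
  calc N * (1 - ∫ x in 0..r, h x) * r ^ (N - 1)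
      = N * (∫ x in r..D', h x) * r ^ (N - 1) := by
        rw [hh.intervalIntegral_eq_one_sub hr.le hrD.le]
    _ ≤ N * ((∫ x in r..D', x ^ (N - 1)) * (h r / r ^ (N - 1))) * r ^ (N - 1) := by
        gcongr
    _ ≤ N * (D' ^ N / N * (h r / r ^ (N - 1))) * r ^ (N - 1) := by
        gcongr
        exact integral_rpow_sub_one_le (by linarith) hr.le
    _ = D' ^ N * h r := by
        field_simp

/-- Bishop–Gromov-type estimate (Part 1 of Proposition 5.4): for a probability `CD(0,N)`
density `h` on `[0, D']` and `w ∈ (0,1)`, one has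
`N (1 - w) r_h(w)^{N-1} ≤ D'^N h(r_h(w))`, where `r = r_h(w)` is characterized by
`r ∈ (0, D')` and `∫_0^r h = w`. -/
theorem radius_upper_estimate (N D' : ℝ) (hN : 1 < N) (hD' : 0 < D')
    (h : ℝ → ℝ) (hh : IsProbCDDensity N D' h)
    (w : ℝ) (hw : w ∈ Set.Ioo (0:ℝ) 1) :
    ∀ r ∈ Set.Ioo (0:ℝ) D', (∫ x in (0:ℝ)..r, h x) = w →
      N * (1 - w) * r ^ (N - 1) ≤ D' ^ N * h r :=
  radius_upper_estimate_general N D' hN h hh w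
end
end
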